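/- arXiv:2008.01720 — 9 statements merged into one kernel-verified Lean document; each statement's English description precedes it below -/
import Mathlib

section
/- For θ ∈ (0,1), the function f(x) = h(θ)·p(x)·(1−θ)^x on ℕ is a probability mass function: f(x) ≥ 0 for all x ∈ ℕ and ∑_{x=0}^∞ f(x) = 1. -/
open scoped BigOperators

/-- `p x = ∑_{k=1}^r a_{k-1} (k-1)! C(x+k-1, x)` (index shifted: `k ∈ range r` stands for `k-1`). -/
noncomputable def p (r : ℕ) (a : ℕ → ℝ) (x : ℕ) : ℝ :=
  ∑ k ∈ Finset.range r, a k * (Nat.factorial k : ℝ) * (Nat.choose (x + k) x : ℝ)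

/-- `h θ = 1 / ∑_{k=1}^r a_{k-1} (k-1)! / θ^k` (index shifted). -/
noncomputable def h (r : ℕ) (a : ℕ → ℝ) (θ : ℝ) : ℝ :=
  1 / ∑ k ∈ Finset.range r, a k * (Nat.factorial k : ℝ) / θ ^ (k + 1)

/-- `A n t = ∑_{y₁+⋯+y_r = n} (n!/(y₁!⋯y_r!)) (∏_{k=1}^r (a_{k-1}(k-1)!)^{y_k})
    C(t + ∑_{k=1}^r k y_k − 1, t)`. -/
noncomputable def A (r : ℕ) (a : ℕ → ℝ) (n t : ℕ) : ℝ :=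
  ∑ y ∈ Finset.Nat.antidiagonalTuple r n,
    ((Nat.factorial n : ℝ) / ∏ k : Fin r, (Nat.factorial (y k) : ℝ)) *
      (∏ k : Fin r, (a (k : ℕ) * (Nat.factorial (k : ℕ) : ℝ)) ^ (y k)) *
      (Nat.choose (t + (∑ k : Fin r, ((k : ℕ) + 1) * y k) - 1) t : ℝ)

/-!
Each term `a_{k-1} (k-1)! C(x+k-1, x) q^x` of `p(x) q^x` is a negative binomial series,
`∑_x C(x+k-1, x) q^x = 1/(1-q)^k` for `|q| < 1`. Summing over `k` at `q = 1 - θ` gives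
`∑_x p(x) (1-θ)^x = ∑_k a_{k-1} (k-1)!/θ^k = 1/h(θ)`, and this normalising constant is
positive because the `a_k` are nonnegative and not all zero.
-/

lemma p_nonneg {r : ℕ} {a : ℕ → ℝ} (ha : ∀ k, 0 ≤ a k) (x : ℕ) : 0 ≤ p r a x :=
  Finset.sum_nonneg fun k _ => by have := ha k; positivity

lemma hasSum_p_mul_geometric (r : ℕ) (a : ℕ → ℝ) {q : ℝ} (hq : ‖q‖ < 1) :
    HasSum (fun x => p r a x * q ^ x) (h r a (1 - q))⁻¹ := by
  have hterm (k : ℕ) : HasSum (fun x => a k * k.factorial * (x + k).choose x * q ^ x)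
      (a k * k.factorial / (1 - q) ^ (k + 1)) := by
    have := (hasSum_choose_mul_geometric_of_norm_lt_one k hq).mul_left (a k * k.factorial)
    simpa only [Nat.choose_symm_add, mul_one_div, mul_assoc] using this
  rw [h, one_div, inv_inv]
  simpa only [p, Finset.sum_mul] using hasSum_sum fun k _ => hterm k

lemma h_pos {r : ℕ} {a : ℕ → ℝ} (ha : ∀ k, 0 ≤ a k) (hne : ∃ k, k < r ∧ a k ≠ 0)
    {θ : ℝ} (hθ : 0 < θ) : 0 < h r a θ := by
  obtain ⟨k₀, hk₀, hak₀⟩ := hne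
  refine one_div_pos.2 <| Finset.sum_pos' (fun k _ => by have := ha k; positivity)
    ⟨k₀, Finset.mem_range.2 hk₀, ?_⟩
  have := (ha k₀).lt_of_ne' hak₀
  positivity

theorem ndoppe_is_pmf_general (r : ℕ) (a : ℕ → ℝ) (ha : ∀ k, 0 ≤ a k)
    (hne : ∃ k, k < r ∧ a k ≠ 0) (θ : ℝ) (hθ : θ ∈ Set.Ioo (0 : ℝ) 1) :
    (∀ x : ℕ, 0 ≤ h r a θ * p r a x * (1 - θ) ^ x) ∧
      HasSum (fun x : ℕ => h r a θ * p r a x * (1 - θ) ^ x) 1 := by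
  obtain ⟨hθ₀, hθ₁⟩ := hθ
  have hh := h_pos ha hne hθ₀
  refine ⟨fun x => ?_, ?_⟩
  · have : 0 ≤ p r a x := p_nonneg ha x
    have : 0 ≤ 1 - θ := by linarith
    positivity
  · have hq : ‖1 - θ‖ < 1 := by rw [Real.norm_eq_abs, abs_lt]; constructor <;> linarith
    have := (hasSum_p_mul_geometric r a hq).mul_left (h r a θ)
    rw [sub_sub_cancel, mul_inv_cancel₀ hh.ne'] at this
    simpa only [mul_assoc] using this

/-- For `θ ∈ (0,1)`, `f(x) = h(θ) p(x) (1−θ)^x` is a probability mass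
function on ℕ: it is nonnegative and sums to one. -/
theorem ndoppe_is_pmf (r : ℕ) (hr : 1 ≤ r) (a : ℕ → ℝ) (ha : ∀ k, 0 ≤ a k)
    (hne : ∃ k, k < r ∧ a k ≠ 0) (θ : ℝ) (hθ : θ ∈ Set.Ioo (0 : ℝ) 1) :
    (∀ x : ℕ, 0 ≤ h r a θ * p r a x * (1 - θ) ^ x) ∧
      HasSum (fun x : ℕ => h r a θ * p r a x * (1 - θ) ^ x) 1 :=
  ndoppe_is_pmf_general r a ha hne θ hθ
end

section
/- For every integer k ≥ 1, every x ∈ ℕ and every θ ∈ (0,1), the CDF of the negative binomial distribution with parameters θ and k equals a regularized incomplete beta function: ∑_{w=0}^x C(w+k−1, w)·θ^k·(1−θ)^w = ((k+x)!/((k−1)!·x!))·∫_0^θ t^{k−1}(1−t)^x dt. -/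
/-!
Induction on `x`. Differentiating `t ^ (m + 1) * (1 - t) ^ (x + 1)` and integrating over `[0, θ]`
expresses `∫₀^θ t^m (1-t)^(x+1)` through `∫₀^θ t^m (1-t)^x` plus the boundary term
`θ^(m+1) (1-θ)^(x+1)`; after normalisation by the factorials, that boundary term is exactly the
`(x+1)`-st term of the negative binomial sum.
-/

open intervalIntegral Nat

theorem mul_integral_pow_mul_one_sub_pow_succ (m x : ℕ) (θ : ℝ) :
    ((m : ℝ) + x + 2) * ∫ t in (0 : ℝ)..θ, t ^ m * (1 - t) ^ (x + 1) =
      (x + 1) * (∫ t in (0 : ℝ)..θ, t ^ m * (1 - t) ^ x) + θ ^ (m + 1) * (1 - θ) ^ (x + 1) := by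
  have hderiv : ∀ t : ℝ, HasDerivAt (fun t : ℝ => t ^ (m + 1) * (1 - t) ^ (x + 1))
      (((m : ℝ) + x + 2) * (t ^ m * (1 - t) ^ (x + 1)) - (x + 1) * (t ^ m * (1 - t) ^ x)) t := by
    intro t
    have hsub : HasDerivAt (fun t : ℝ => 1 - t) (-1) t := (hasDerivAt_id' t).const_sub 1
    refine ((hasDerivAt_pow (m + 1) t).fun_mul (hsub.fun_pow (x + 1))).congr_deriv ?_
    simp only [Nat.add_sub_cancel]
    push_cast
    ring
  have hftc := integral_eq_sub_of_hasDerivAt (fun t _ => hderiv t)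
    (a := 0) (b := θ) (Continuous.intervalIntegrable (by fun_prop) _ _)
  rw [integral_sub ((Continuous.intervalIntegrable (by fun_prop) _ _).const_mul _)
      ((Continuous.intervalIntegrable (by fun_prop) _ _).const_mul _),
    integral_const_mul, integral_const_mul] at hftc
  rw [zero_pow (succ_ne_zero m), zero_mul, sub_zero] at hftc
  linarith

theorem sum_choose_mul_pow_eq_factorial_div_mul_integral (m x : ℕ) (θ : ℝ) :
    ∑ w ∈ Finset.range (x + 1), ((w + m).choose w : ℝ) * θ ^ (m + 1) * (1 - θ) ^ w =
      ((m + 1 + x)! / (m ! * x !) : ℝ) * ∫ t in (0 : ℝ)..θ, t ^ m * (1 - t) ^ x := by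
  induction x with
  | zero =>
    simp only [Finset.sum_range_one, zero_add, choose_zero_right, pow_zero, mul_one, add_zero,
      factorial_zero, factorial_succ m, integral_pow]
    push_cast
    field_simp
    ring
  | succ x ih =>
    rw [Finset.sum_range_succ, ih, Nat.cast_add_choose, show x + 1 + m = m + 1 + x by ring,
      show m + 1 + (x + 1) = m + 1 + x + 1 by ring, factorial_succ (m + 1 + x), factorial_succ x]
    have hI := mul_integral_pow_mul_one_sub_pow_succ m x θ
    push_cast
    field_simp
    linear_combination -hI

theorem negBinomial_cdf_eq_regularized_beta_general (k : ℕ) (hk : 1 ≤ k) (x : ℕ)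
    (θ : ℝ) :
    ∑ w ∈ Finset.range (x + 1), (Nat.choose (w + k - 1) w : ℝ) * θ ^ k * (1 - θ) ^ w =
      ((Nat.factorial (k + x) : ℝ) / ((Nat.factorial (k - 1) : ℝ) * (Nat.factorial x : ℝ))) *
        ∫ t in (0 : ℝ)..θ, t ^ (k - 1) * (1 - t) ^ x := by
  obtain ⟨m, rfl⟩ := Nat.exists_eq_add_of_le' hk
  simpa using sum_choose_mul_pow_eq_factorial_div_mul_integral m x θ

/-- For every integer `k ≥ 1`, `x ∈ ℕ` and `θ ∈ (0,1)`, the CDF of the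
negative binomial distribution with parameters `θ` and `k` equals a regularized
incomplete beta function:
`∑_{w=0}^x C(w+k−1, w) θ^k (1−θ)^w = ((k+x)!/((k−1)!·x!)) ∫_0^θ t^{k−1}(1−t)^x dt`. -/
theorem negBinomial_cdf_eq_regularized_beta (k : ℕ) (hk : 1 ≤ k) (x : ℕ)
    (θ : ℝ) (hθ : θ ∈ Set.Ioo (0 : ℝ) 1) :
    ∑ w ∈ Finset.range (x + 1), (Nat.choose (w + k - 1) w : ℝ) * θ ^ k * (1 - θ) ^ w =
      ((Nat.factorial (k + x) : ℝ) / ((Nat.factorial (k - 1) : ℝ) * (Nat.factorial x : ℝ))) *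
        ∫ t in (0 : ℝ)..θ, t ^ (k - 1) * (1 - t) ^ x :=
  negBinomial_cdf_eq_regularized_beta_general k hk x θ
end

section
/- For θ ∈ (0,1) and x ∈ ℕ, the CDF of the NDOPPE distribution satisfies F(x) := ∑_{w=0}^x f(w) = h(θ)·∑_{k=1}^r a_{k−1}·((k−1)!/θ^k)·((k+x)!/((k−1)!·x!))·∫_0^θ t^{k−1}(1−t)^x dt, i.e. F(x) is the h(θ)·a_{k−1}·(k−1)!/θ^k–weighted combination of the regularized incomplete beta functions I_θ(k, x+1). -/
open scoped BigOperators

/-!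
The partial sums `θ^(k+1) ∑_{w ≤ x} C(w+k, w) (1-θ)^w` of the negative binomial series are
incomplete beta integrals: integrating `t^k (1-t)^(x+1)` by parts against `d(t^(k+1))` lowers the
exponent of `1 - t` by one and produces exactly the next term of the series, so the identity follows
by induction on `x`. The CDF is then obtained by exchanging the sums over `w` and `k`.
-/

open Finset Nat

lemma integral_pow_mul_one_sub_pow_succ (k x : ℕ) (θ : ℝ) :
    ((k : ℝ) + x + 2) * ∫ t in (0 : ℝ)..θ, t ^ k * (1 - t) ^ (x + 1) =
      ((x : ℝ) + 1) * (∫ t in (0 : ℝ)..θ, t ^ k * (1 - t) ^ x) +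
        θ ^ (k + 1) * (1 - θ) ^ (x + 1) := by
  have hderiv : ∀ t : ℝ, HasDerivAt (fun t : ℝ => t ^ (k + 1) * (1 - t) ^ (x + 1))
      (((k : ℝ) + x + 2) * (t ^ k * (1 - t) ^ (x + 1)) -
        ((x : ℝ) + 1) * (t ^ k * (1 - t) ^ x)) t := by
    intro t
    have hpow : HasDerivAt (fun t : ℝ => t ^ (k + 1)) (((k : ℝ) + 1) * t ^ k) t := by
      simpa using hasDerivAt_pow (k + 1) t
    have hpow' : HasDerivAt (fun t : ℝ => (1 - t) ^ (x + 1))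
        (((x : ℝ) + 1) * (1 - t) ^ x * (-1)) t := by
      simpa using ((hasDerivAt_id' t).const_sub (1 : ℝ)).fun_pow (x + 1)
    refine (hpow.fun_mul hpow').congr_deriv ?_
    ring
  have hint : ∀ n : ℕ, IntervalIntegrable (fun t : ℝ => t ^ k * (1 - t) ^ n)
      MeasureTheory.volume 0 θ := fun n => by
    apply Continuous.intervalIntegrable
    fun_prop
  have hftc := intervalIntegral.integral_eq_sub_of_hasDerivAt (fun t _ => hderiv t)
    (((hint _).const_mul _).sub ((hint _).const_mul _))
  rw [intervalIntegral.integral_sub ((hint _).const_mul _) ((hint _).const_mul _),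
    intervalIntegral.integral_const_mul, intervalIntegral.integral_const_mul] at hftc
  rw [zero_pow (succ_ne_zero k), zero_mul, sub_zero] at hftc
  linarith

lemma factorial_mul_integral_eq_sum_choose_mul_pow (k x : ℕ) (θ : ℝ) :
    ((k + 1 + x)! : ℝ) * ∫ t in (0 : ℝ)..θ, t ^ k * (1 - t) ^ x =
      (k ! : ℝ) * x ! * θ ^ (k + 1) * ∑ w ∈ range (x + 1), ((w + k).choose w : ℝ) * (1 - θ) ^ w := by
  induction x with
  | zero =>
    simp only [pow_zero, mul_one, integral_pow, ne_eq, add_eq_zero, one_ne_zero, and_false,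
      not_false_eq_true, zero_pow, sub_zero, add_zero, factorial_succ, factorial_zero, zero_add,
      sum_range_one, choose_zero_right]
    push_cast
    field_simp
  | succ x ih =>
    have hfac_succ : ((k + 1 + (x + 1))! : ℝ) = ((k : ℝ) + x + 2) * (k + 1 + x)! := by
      rw [show k + 1 + (x + 1) = (k + 1 + x) + 1 by omega, factorial_succ]
      push_cast
      ring
    have hfac_choose :
        ((k + 1 + x)! : ℝ) = (x + 1 + k).choose (x + 1) * k ! * ((x + 1) * x !) := by
      rw [show k + 1 + x = k + (x + 1) by omega, add_comm (x + 1) k,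
        ← add_choose_mul_factorial_mul_factorial k (x + 1), factorial_succ]
      push_cast
      ring
    rw [sum_range_succ, hfac_succ, mul_assoc, mul_left_comm, integral_pow_mul_one_sub_pow_succ,
      factorial_succ]
    push_cast
    linear_combination ((x : ℝ) + 1) * ih + θ ^ (k + 1) * (1 - θ) ^ (x + 1) * hfac_choose

lemma sum_p_mul_pow_eq_beta_mixture (r : ℕ) (a : ℕ → ℝ) {θ : ℝ} (hθ : θ ≠ 0) (x : ℕ) :
    ∑ w ∈ range (x + 1), p r a w * (1 - θ) ^ w =
      ∑ k ∈ range r, a k * ((k ! : ℝ) / θ ^ (k + 1)) *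
        (((k + 1 + x)! : ℝ) / ((k ! : ℝ) * x !)) * ∫ t in (0 : ℝ)..θ, t ^ k * (1 - t) ^ x := by
  simp only [p, sum_mul]
  rw [sum_comm]
  refine sum_congr rfl fun k _ => ?_
  have hbeta := factorial_mul_integral_eq_sum_choose_mul_pow k x θ
  have hk : (k ! : ℝ) ≠ 0 := by positivity
  have hx : (x ! : ℝ) ≠ 0 := by positivity
  have hsum : ∑ w ∈ range (x + 1), a k * k ! * ((w + k).choose w : ℝ) * (1 - θ) ^ w =
      a k * k ! * ∑ w ∈ range (x + 1), ((w + k).choose w : ℝ) * (1 - θ) ^ w := by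
    rw [mul_sum]
    exact sum_congr rfl fun w _ => by ring
  rw [hsum]
  field_simp
  linear_combination -a k * hbeta

theorem ndoppe_cdf_eq_beta_mixture_general (r : ℕ) (a : ℕ → ℝ) (θ : ℝ)
    (hθ : θ ∈ Set.Ioo (0 : ℝ) 1) (x : ℕ) :
    ∑ w ∈ Finset.range (x + 1), h r a θ * p r a w * (1 - θ) ^ w =
      h r a θ * ∑ k ∈ Finset.range r,
        a k * ((Nat.factorial k : ℝ) / θ ^ (k + 1)) *
          ((Nat.factorial (k + 1 + x) : ℝ) / ((Nat.factorial k : ℝ) * (Nat.factorial x : ℝ))) *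
          ∫ t in (0 : ℝ)..θ, t ^ k * (1 - t) ^ x := by
  rw [← sum_p_mul_pow_eq_beta_mixture r a hθ.1.ne' x, mul_sum]
  exact sum_congr rfl fun w _ => mul_assoc _ _ _

/-- For `θ ∈ (0,1)` and `x ∈ ℕ`, the CDF of the NDOPPE distribution satisfies
`F(x) = ∑_{w=0}^x f(w)
      = h(θ) ∑_{k=1}^r a_{k−1} ((k−1)!/θ^k) ((k+x)!/((k−1)!·x!)) ∫_0^θ t^{k−1}(1−t)^x dt`
(index shifted: `k ∈ range r` stands for `k−1`). -/
theorem ndoppe_cdf_eq_beta_mixture (r : ℕ) (hr : 1 ≤ r) (a : ℕ → ℝ) (ha : ∀ k, 0 ≤ a k)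
    (hne : ∃ k, k < r ∧ a k ≠ 0) (θ : ℝ) (hθ : θ ∈ Set.Ioo (0 : ℝ) 1) (x : ℕ) :
    ∑ w ∈ Finset.range (x + 1), h r a θ * p r a w * (1 - θ) ^ w =
      h r a θ * ∑ k ∈ Finset.range r,
        a k * ((Nat.factorial k : ℝ) / θ ^ (k + 1)) *
          ((Nat.factorial (k + 1 + x) : ℝ) / ((Nat.factorial k : ℝ) * (Nat.factorial x : ℝ))) *
          ∫ t in (0 : ℝ)..θ, t ^ k * (1 - t) ^ x :=
  ndoppe_cdf_eq_beta_mixture_general r a θ hθ x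
end

section
/- For every θ ∈ (0,1) and every x ∈ ℕ, the CDF of the natural discrete Lindley distribution has the closed form ∑_{w=0}^x (θ²/(1+θ))·(2+w)·(1−θ)^w = 1 − (1 + 2θ + θx)·(1−θ)^{x+1}/(1+θ). -/
open scoped BigOperators

/-- For every `θ ∈ (0,1)` and `x ∈ ℕ`, the CDF of the natural discrete
Lindley distribution has the closed form
`∑_{w=0}^x (θ²/(1+θ)) (2+w) (1−θ)^w = 1 − (1 + 2θ + θx)(1−θ)^{x+1}/(1+θ)`. -/
theorem ndl_cdf_closed_form (θ : ℝ) (hθ : θ ∈ Set.Ioo (0 : ℝ) 1) (x : ℕ) :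
    ∑ w ∈ Finset.range (x + 1), θ ^ 2 / (1 + θ) * (2 + (w : ℝ)) * (1 - θ) ^ w =
      1 - (1 + 2 * θ + θ * (x : ℝ)) * (1 - θ) ^ (x + 1) / (1 + θ) := by
  obtain ⟨h0, h1⟩ := hθ
  have hne : (1 + θ) ≠ 0 := by linarith
  induction x with
  | zero => simp; field_simp; ring
  | succ n ih =>
      rw [Finset.sum_range_succ, ih]
      push_cast
      field_simp
      ring
end

section
/- For every integer n ≥ 1 and every t ∈ ℕ, ∑_{(x_1,…,x_n) ∈ ℕ^n, x_1+⋯+x_n = t} ∏_{i=1}^n p(x_i) = A_n(t); that is, the n-fold convolution of the polynomial factor p equals the multinomial-mixture coefficient A_n(t). -/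
open scoped BigOperators

/-! The generating function of `p` is `∑ₖ aₖ k! (1 - X)⁻⁽ᵏ⁺¹⁾`, and the `n`-fold convolution is the
`t`-th coefficient of its `n`-th power. Expanding that power by the multinomial theorem turns each
term into a multiple of `(1 - X)⁻ᵐ` with `m = ∑ₖ (k + 1) yₖ`, whose `t`-th coefficient is
`C(t + m - 1, t)`. -/

open PowerSeries Finset

namespace PowerSeries

section CommSemiring

variable {R : Type*} [CommSemiring R]

theorem coeff_pow_eq_sum_antidiagonalTuple (f : R⟦X⟧) (n t : ℕ) :
    coeff t (f ^ n) = ∑ x ∈ Nat.antidiagonalTuple n t, ∏ i, coeff (x i) f := by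
  rw [← Fin.prod_const, coeff_prod, ← piAntidiag_univ_fin_eq_antidiagonalTuple,
    finsuppAntidiag, sum_map]
  exact sum_attach _ fun x : Fin n → ℕ => ∏ i, coeff (x i) f

end CommSemiring

section CommRing

variable {R : Type*} [CommRing R]

-- At `m = 0` the truncated subtraction makes `(t - 1).choose t` the coefficient `[t = 0]` of `1`.
theorem coeff_invOneSubPow (m t : ℕ) :
    coeff t (invOneSubPow R m : R⟦X⟧) = ((t + m - 1).choose t : ℕ) := by
  rcases m with _ | m
  · rcases t with _ | t <;> simp [invOneSubPow_zero, coeff_one]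
  · rw [invOneSubPow_val_succ_eq_mk_add_choose, coeff_mk, show t + (m + 1) - 1 = m + t by omega,
      Nat.choose_symm_add]

theorem prod_C_mul_invOneSubPow_pow {ι : Type*} (s : Finset ι) (c : ι → R) (d y : ι → ℕ) :
    ∏ k ∈ s, (C (c k) * invOneSubPow R (d k)) ^ y k
      = C (∏ k ∈ s, c k ^ y k) * invOneSubPow R (∑ k ∈ s, d k * y k) := by
  have hunits : ∏ k ∈ s, invOneSubPow R (d k) ^ y k = invOneSubPow R (∑ k ∈ s, d k * y k) := by
    simp_rw [invOneSubPow_eq_inv_one_sub_pow, ← pow_mul, prod_pow_eq_pow_sum]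
  rw [← hunits]
  push_cast
  rw [map_prod, ← prod_mul_distrib]
  simp_rw [map_pow, mul_pow]

theorem coeff_sum_C_mul_invOneSubPow_pow (r : ℕ) (c : Fin r → R) (n t : ℕ) :
    coeff t ((∑ k : Fin r, C (c k) * invOneSubPow R (k + 1)) ^ n)
      = ∑ y ∈ Nat.antidiagonalTuple r n, (Nat.multinomial univ y : R) * (∏ k, c k ^ y k) *
          ((t + ∑ k : Fin r, ((k : ℕ) + 1) * y k - 1).choose t : ℕ) := by
  rw [sum_pow_eq_sum_piAntidiag, map_sum, piAntidiag_univ_fin_eq_antidiagonalTuple]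
  refine sum_congr rfl fun y _ => ?_
  rw [prod_C_mul_invOneSubPow_pow, ← map_natCast C, ← mul_assoc, ← map_mul, coeff_C_mul,
    coeff_invOneSubPow]

end CommRing

end PowerSeries

theorem Nat.cast_multinomial {α K : Type*} [Semifield K] [CharZero K] (s : Finset α)
    (f : α → ℕ) :
    (multinomial s f : K) = (∑ i ∈ s, f i).factorial / ∏ i ∈ s, ((f i).factorial : K) := by
  rw [eq_div_iff (prod_ne_zero_iff.2 fun i _ => Nat.cast_ne_zero.2 (f i).factorial_ne_zero),
    mul_comm]
  exact_mod_cast multinomial_spec s f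

theorem mk_p_eq_sum_C_mul_invOneSubPow (r : ℕ) (a : ℕ → ℝ) :
    mk (p r a) = ∑ k : Fin r, C (a k * (k : ℕ).factorial) * (invOneSubPow ℝ (k + 1) : ℝ⟦X⟧) := by
  ext t
  simp only [coeff_mk, map_sum, coeff_C_mul, coeff_invOneSubPow, p, Nat.add_succ_sub_one]
  rw [← Fin.sum_univ_eq_sum_range (fun k => a k * (k.factorial : ℝ) * ((t + k).choose t : ℝ)) r]

theorem p_convolution_eq_A_general (r : ℕ) (a : ℕ → ℝ) (n : ℕ) (t : ℕ) :
    ∑ x ∈ Finset.Nat.antidiagonalTuple n t, ∏ i, p r a (x i) = A r a n t := by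
  have hconv := coeff_pow_eq_sum_antidiagonalTuple (mk (p r a)) n t
  simp only [coeff_mk] at hconv
  rw [← hconv, mk_p_eq_sum_C_mul_invOneSubPow, coeff_sum_C_mul_invOneSubPow_pow, A]
  refine sum_congr rfl fun y hy => ?_
  rw [Nat.cast_multinomial, Nat.mem_antidiagonalTuple.1 hy, mul_assoc]

/-- For every integer `n ≥ 1` and every `t ∈ ℕ`,
`∑_{x₁+⋯+x_n = t} ∏_{i=1}^n p(x_i) = A_n(t)`: the `n`-fold convolution of the polynomial
factor `p` equals the multinomial-mixture coefficient `A_n(t)`. -/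
theorem p_convolution_eq_A (r : ℕ) (hr : 1 ≤ r) (a : ℕ → ℝ) (ha : ∀ k, 0 ≤ a k)
    (n : ℕ) (hn : 1 ≤ n) (t : ℕ) :
    ∑ x ∈ Finset.Nat.antidiagonalTuple n t, ∏ i, p r a (x i) = A r a n t :=
  p_convolution_eq_A_general r a n t
end

section
/- For all integers m, n ≥ 1 and every t ∈ ℕ, A_{m+n}(t) = ∑_{s=0}^t A_m(s)·A_n(t−s); in particular, since A_1 = p, for n ≥ 2 one has A_n(t) = ∑_{x=0}^t p(x)·A_{n−1}(t−x). -/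
open scoped BigOperators

/-! The numbers `A n t` are the coefficients of the `n`-th power of the series
`F = ∑ₖ aₖ k! (1 - X)^{-(k+1)}`: expanding `F ^ n` by the multinomial theorem, the monomial
indexed by `y` is a multiple of `(1 - X)^{-∑ₖ (k+1) yₖ}`, whose `t`-th coefficient is
`C(t + ∑ₖ (k+1) yₖ - 1, t)`. The convolution identity is then the coefficient of
`F ^ (m + n) = F ^ m * F ^ n`, and `A 1 = p` is the coefficient of `F` itself. -/

open Finset PowerSeries
open scoped Nat

theorem PowerSeries.coeff_mk_one_pow {S : Type*} [CommRing S] (d t : ℕ) :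
    coeff t ((PowerSeries.mk 1 : S⟦X⟧) ^ d) = Nat.multichoose d t := by
  cases d with
  | zero => cases t <;> simp [Nat.multichoose_eq]
  | succ d =>
    rw [mk_one_pow_eq_mk_choose_add, coeff_mk, Nat.multichoose_eq, Nat.add_right_comm,
      Nat.add_sub_cancel, Nat.choose_symm_add]

theorem Nat.cast_multinomial_eq_div {K : Type*} [Field K] [CharZero K] {ι : Type*}
    (s : Finset ι) (f : ι → ℕ) :
    (Nat.multinomial s f : K) = ((∑ i ∈ s, f i)! : K) / ∏ i ∈ s, ((f i)! : K) := by
  rw [eq_div_iff (prod_ne_zero_iff.mpr fun i _ => Nat.cast_ne_zero.mpr (Nat.factorial_ne_zero _)),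
    mul_comm]
  exact_mod_cast Nat.multinomial_spec s f

noncomputable def pSeries (r : ℕ) (a : ℕ → ℝ) : ℝ⟦X⟧ :=
  ∑ k : Fin r, C (a k * (k : ℕ)!) * PowerSeries.mk 1 ^ ((k : ℕ) + 1)

theorem coeff_pSeries_pow (r : ℕ) (a : ℕ → ℝ) (n t : ℕ) :
    coeff t (pSeries r a ^ n) = A r a n t := by
  rw [pSeries, sum_pow_eq_sum_piAntidiag, piAntidiag_univ_fin_eq_antidiagonalTuple, map_sum, A]
  refine sum_congr rfl fun y hy => ?_
  have hprod : ∏ k : Fin r, (C (a k * (k : ℕ)!) * PowerSeries.mk 1 ^ ((k : ℕ) + 1)) ^ y k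
      = C (∏ k : Fin r, (a k * (k : ℕ)!) ^ y k) *
          (PowerSeries.mk 1 : ℝ⟦X⟧) ^ (∑ k : Fin r, ((k : ℕ) + 1) * y k) := by
    rw [map_prod, ← prod_pow_eq_pow_sum, ← prod_mul_distrib]
    exact prod_congr rfl fun k _ => by rw [mul_pow, map_pow, pow_mul]
  rw [hprod, ← map_natCast (C (R := ℝ)), ← mul_assoc, ← map_mul, coeff_C_mul,
    coeff_mk_one_pow, Nat.cast_multinomial_eq_div, Nat.mem_antidiagonalTuple.mp hy,
    Nat.multichoose_eq, add_comm t]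

theorem A_add (r : ℕ) (a : ℕ → ℝ) (m n t : ℕ) :
    A r a (m + n) t = ∑ s ∈ range (t + 1), A r a m s * A r a n (t - s) := by
  simp_rw [← coeff_pSeries_pow, pow_add, coeff_mul, Nat.sum_antidiagonal_eq_sum_range_succ
    (fun i j => coeff i (pSeries r a ^ m) * coeff j (pSeries r a ^ n))]

theorem A_one (r : ℕ) (a : ℕ → ℝ) (x : ℕ) : A r a 1 x = p r a x := by
  rw [← coeff_pSeries_pow, pow_one, pSeries, map_sum, p, ← Fin.sum_univ_eq_sum_range]
  refine sum_congr rfl fun k _ => ?_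
  rw [coeff_C_mul, coeff_mk_one_pow, Nat.multichoose_eq, Nat.add_right_comm, Nat.add_sub_cancel,
    add_comm x]

theorem A_convolution_general (r : ℕ) (a : ℕ → ℝ)
    (m n : ℕ) (t : ℕ) :
    (A r a (m + n) t = ∑ s ∈ Finset.range (t + 1), A r a m s * A r a n (t - s)) ∧
    ((∀ x : ℕ, A r a 1 x = p r a x) ∧
      (2 ≤ n → A r a n t = ∑ x ∈ Finset.range (t + 1), p r a x * A r a (n - 1) (t - x))) := by
  refine ⟨A_add r a m n t, A_one r a, fun hn => ?_⟩
  obtain ⟨k, rfl⟩ : ∃ k, n = 1 + k := ⟨n - 1, by omega⟩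
  simp_rw [A_add, A_one, Nat.add_sub_cancel_left]

/-- For all integers `m, n ≥ 1` and every `t ∈ ℕ`,
`A_{m+n}(t) = ∑_{s=0}^t A_m(s) A_n(t−s)`; in particular, since `A₁ = p`, for `n ≥ 2` one has
`A_n(t) = ∑_{x=0}^t p(x) A_{n−1}(t−x)`. -/
theorem A_convolution (r : ℕ) (hr : 1 ≤ r) (a : ℕ → ℝ) (ha : ∀ k, 0 ≤ a k)
    (m n : ℕ) (hm : 1 ≤ m) (hn : 1 ≤ n) (t : ℕ) :
    (A r a (m + n) t = ∑ s ∈ Finset.range (t + 1), A r a m s * A r a n (t - s)) ∧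
    ((∀ x : ℕ, A r a 1 x = p r a x) ∧
      (2 ≤ n → A r a n t = ∑ x ∈ Finset.range (t + 1), p r a x * A r a (n - 1) (t - x))) :=
  A_convolution_general r a m n t
end

section
/- (Unbiasedness of the PMF estimator f̂) For every integer n ≥ 2, every x ∈ ℕ and every θ ∈ (0,1), ∑_{t=x}^∞ (p(x)·A_{n−1}(t−x)/A_n(t)) · h(θ)^n·A_n(t)·(1−θ)^t = h(θ)·p(x)·(1−θ)^x = f(x); that is, the estimator f̂(x) = p(x)·A_{n−1}(T−x)/A_n(T)·1{T ≥ x} is an unbiased estimator of f(x) when T has the PMF f_T(t) = h(θ)^n·A_n(t)·(1−θ)^t. -/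
open scoped BigOperators

lemma antidiag_eq (r n : ℕ) :
    Finset.Nat.antidiagonalTuple r n = Finset.piAntidiag (Finset.univ : Finset (Fin r)) n := by
  ext y
  simp [Finset.Nat.mem_antidiagonalTuple, Finset.mem_piAntidiag]

lemma hasSum_A (r : ℕ) (a : ℕ → ℝ) (m : ℕ) (hm : 1 ≤ m) {θ : ℝ}
    (hθ : θ ∈ Set.Ioo (0 : ℝ) 1) :
    HasSum (fun t : ℕ => A r a m t * (1 - θ) ^ t)
      ((∑ k ∈ Finset.range r, a k * (Nat.factorial k : ℝ) / θ ^ (k + 1)) ^ m) := by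
  obtain ⟨hθ0, hθ1⟩ := hθ
  have hz : ‖(1 - θ : ℝ)‖ < 1 := by
    rw [Real.norm_eq_abs, abs_lt]; constructor <;> linarith
  -- rewrite the target via the multinomial theorem
  have htarget :
      (∑ k ∈ Finset.range r, a k * (Nat.factorial k : ℝ) / θ ^ (k + 1)) ^ m =
        ∑ y ∈ Finset.Nat.antidiagonalTuple r m,
          ((Nat.factorial m : ℝ) / ∏ k : Fin r, (Nat.factorial (y k) : ℝ)) *
            (∏ k : Fin r, (a (k : ℕ) * (Nat.factorial (k : ℕ) : ℝ)) ^ (y k)) *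
            (1 / θ ^ (∑ k : Fin r, ((k : ℕ) + 1) * y k)) := by
    rw [← Fin.sum_univ_eq_sum_range (fun k => a k * (Nat.factorial k : ℝ) / θ ^ (k + 1)),
      Finset.sum_pow_eq_sum_piAntidiag, ← antidiag_eq]
    refine Finset.sum_congr rfl fun y hy => ?_
    rw [Finset.Nat.mem_antidiagonalTuple] at hy
    have hmul : (Nat.multinomial Finset.univ y : ℝ) =
        (Nat.factorial m : ℝ) / ∏ k : Fin r, (Nat.factorial (y k) : ℝ) := by
      rw [eq_div_iff (by positivity), mul_comm]
      have := Nat.multinomial_spec (Finset.univ : Finset (Fin r)) y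
      rw [hy] at this
      push_cast [← this]
      ring
    rw [hmul]
    have hprod : ∏ k : Fin r, (a (k : ℕ) * (Nat.factorial (k : ℕ) : ℝ) / θ ^ ((k : ℕ) + 1)) ^ (y k)
        = (∏ k : Fin r, (a (k : ℕ) * (Nat.factorial (k : ℕ) : ℝ)) ^ (y k)) *
          (1 / θ ^ (∑ k : Fin r, ((k : ℕ) + 1) * y k)) := by
      simp_rw [div_pow]
      rw [Finset.prod_div_distrib, mul_one_div]
      congr 1
      simp_rw [← pow_mul]
      exact Finset.prod_pow_eq_pow_sum _ _ _
    rw [hprod]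
    ring
  rw [htarget]
  -- now sum over t, exchanging with the finite sum over y
  unfold A
  simp_rw [Finset.sum_mul]
  refine hasSum_sum fun y hy => ?_
  rw [Finset.Nat.mem_antidiagonalTuple] at hy
  set S := ∑ k : Fin r, ((k : ℕ) + 1) * y k with hSdef
  have hS : m ≤ S := by
    rw [← hy]
    exact Finset.sum_le_sum fun k _ => by nlinarith [Nat.zero_le (y k), Nat.zero_le (k : ℕ)]
  have hS1 : 1 ≤ S := le_trans hm hS
  have hchoose : ∀ t : ℕ, (Nat.choose (t + S - 1) t : ℝ) =
      ((t + (S - 1)).choose (S - 1) : ℝ) := by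
    intro t
    congr 1
    rw [show t + S - 1 = t + (S - 1) by omega,
      ← Nat.choose_symm (Nat.le_add_left (S - 1) t), Nat.add_sub_cancel]
  have key := (hasSum_choose_mul_geometric_of_norm_lt_one (S - 1) hz).mul_left
      (((Nat.factorial m : ℝ) / ∏ k : Fin r, (Nat.factorial (y k) : ℝ)) *
        ∏ k : Fin r, (a (k : ℕ) * (Nat.factorial (k : ℕ) : ℝ)) ^ (y k))
  rw [show (1 : ℝ) - (1 - θ) = θ by ring, show S - 1 + 1 = S by omega] at key
  have heq : (fun t : ℕ =>
      ((Nat.factorial m : ℝ) / ∏ k : Fin r, (Nat.factorial (y k) : ℝ)) *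
        (∏ k : Fin r, (a (k : ℕ) * (Nat.factorial (k : ℕ) : ℝ)) ^ (y k)) *
        (Nat.choose (t + S - 1) t : ℝ) * (1 - θ) ^ t) =
      fun t : ℕ =>
        (((Nat.factorial m : ℝ) / ∏ k : Fin r, (Nat.factorial (y k) : ℝ)) *
          ∏ k : Fin r, (a (k : ℕ) * (Nat.factorial (k : ℕ) : ℝ)) ^ (y k)) *
          (((t + (S - 1)).choose (S - 1) : ℝ) * (1 - θ) ^ t) := by
    funext t
    rw [hchoose t]; ring
  rw [heq]
  convert key using 1

lemma A_pos (r : ℕ) (hr : 1 ≤ r) (a : ℕ → ℝ) (ha : ∀ k, 0 ≤ a k) (ha0 : 0 < a 0)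
    (m t : ℕ) (hm : 1 ≤ m) : 0 < A r a m t := by
  unfold A
  refine Finset.sum_pos' (fun y _ => ?_) ?_
  · have h1 : (0:ℝ) ≤ (Nat.factorial m : ℝ) / ∏ k : Fin r, (Nat.factorial (y k) : ℝ) := by
      positivity
    have h2 : (0:ℝ) ≤ ∏ k : Fin r, (a (k : ℕ) * (Nat.factorial (k : ℕ) : ℝ)) ^ (y k) := by
      refine Finset.prod_nonneg fun k _ => pow_nonneg (mul_nonneg (ha _) (by positivity)) _
    positivity
  · refine ⟨fun i => if i = ⟨0, hr⟩ then m else 0, ?_, ?_⟩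
    · rw [Finset.Nat.mem_antidiagonalTuple]
      simp
    · have hv : ∀ k : Fin r, ((k : ℕ) + 1) * (if k = ⟨0, hr⟩ then m else 0) =
        if k = ⟨0, hr⟩ then m else 0 := by
        intro k
        by_cases hk : k = ⟨0, hr⟩ <;> simp [hk]
      have hS : (∑ k : Fin r, ((k : ℕ) + 1) * (if k = ⟨0, hr⟩ then m else 0)) = m := by
        simp_rw [hv]; simp
      rw [hS]
      have hc : 0 < (Nat.choose (t + m - 1) t : ℝ) := by
        have : t ≤ t + m - 1 := by omega
        exact_mod_cast Nat.choose_pos this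
      have hfac : (0:ℝ) < (Nat.factorial m : ℝ) /
          ∏ k : Fin r, (Nat.factorial (if k = ⟨0, hr⟩ then m else 0) : ℝ) := by positivity
      have hprod : (0:ℝ) < ∏ k : Fin r,
          (a (k : ℕ) * (Nat.factorial (k : ℕ) : ℝ)) ^ (if k = ⟨0, hr⟩ then m else 0) := by
        refine Finset.prod_pos fun k _ => ?_
        by_cases hk : k = ⟨0, hr⟩
        · subst hk
          simp only [if_pos rfl]
          have : (0:ℝ) < a 0 * (Nat.factorial 0 : ℝ) := by simpa using ha0
          exact pow_pos this m
        · simp [hk]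
      positivity

/-- Unbiasedness of the PMF estimator `f̂`: For every integer `n ≥ 2`,
every `x ∈ ℕ` and every `θ ∈ (0,1)`,
`∑_{t=x}^∞ (p(x) A_{n−1}(t−x)/A_n(t)) · h(θ)^n A_n(t) (1−θ)^t = h(θ) p(x) (1−θ)^x = f(x)`;
i.e. `f̂(x) = p(x) A_{n−1}(T−x)/A_n(T) · 1{T ≥ x}` is an unbiased estimator of `f(x)` when
`T` has PMF `f_T(t) = h(θ)^n A_n(t) (1−θ)^t`. -/
theorem pmf_estimator_unbiased (r : ℕ) (hr : 1 ≤ r) (a : ℕ → ℝ) (ha : ∀ k, 0 ≤ a k)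
    (ha0 : 0 < a 0) (n : ℕ) (hn : 2 ≤ n) (x : ℕ) (θ : ℝ) (hθ : θ ∈ Set.Ioo (0 : ℝ) 1) :
    HasSum
      (fun t : ℕ =>
        (if x ≤ t then p r a x * A r a (n - 1) (t - x) / A r a n t else 0) *
          (h r a θ ^ n * A r a n t * (1 - θ) ^ t))
      (h r a θ * p r a x * (1 - θ) ^ x) := by
  obtain ⟨hθ0, hθ1⟩ := hθ
  set Sg := ∑ k ∈ Finset.range r, a k * (Nat.factorial k : ℝ) / θ ^ (k + 1) with hSgdef
  have hSgpos : 0 < Sg := by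
    refine Finset.sum_pos' (fun k _ => div_nonneg (mul_nonneg (ha k) (by positivity))
      (by positivity)) ⟨0, Finset.mem_range.mpr hr, ?_⟩
    simp only [Nat.factorial_zero, Nat.cast_one, mul_one, pow_one]
    positivity
  have hh : h r a θ = 1 / Sg := rfl
  have hhSg : h r a θ * Sg = 1 := by rw [hh]; field_simp
  have hApos : ∀ t, 0 < A r a n t := fun t => A_pos r hr a ha ha0 n t (by omega)
  set c : ℝ := p r a x * h r a θ ^ n with hc
  have hfeq : (fun t : ℕ =>
      (if x ≤ t then p r a x * A r a (n - 1) (t - x) / A r a n t else 0) *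
        (h r a θ ^ n * A r a n t * (1 - θ) ^ t)) =
      fun t : ℕ => if x ≤ t then c * (A r a (n - 1) (t - x) * (1 - θ) ^ t) else 0 := by
    funext t
    by_cases hxt : x ≤ t
    · simp only [if_pos hxt, hc]
      rw [div_mul_eq_mul_div, div_eq_iff (hApos t).ne']
      ring
    · simp [hxt]
  rw [hfeq]
  have hi : Function.Injective (fun s : ℕ => s + x) := add_left_injective x
  have hzero : ∀ t : ℕ, t ∉ Set.range (fun s : ℕ => s + x) →
      (if x ≤ t then c * (A r a (n - 1) (t - x) * (1 - θ) ^ t) else 0) = 0 := by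
    intro t ht
    rw [if_neg]
    intro hxt
    exact ht ⟨t - x, by show t - x + x = t; omega⟩
  rw [← hi.hasSum_iff hzero]
  have hcomp : ((fun t : ℕ => if x ≤ t then c * (A r a (n - 1) (t - x) * (1 - θ) ^ t) else 0) ∘
      fun s : ℕ => s + x) =
      fun s : ℕ => (c * (1 - θ) ^ x) * (A r a (n - 1) s * (1 - θ) ^ s) := by
    funext s
    simp only [Function.comp_apply, if_pos (Nat.le_add_left x s), Nat.add_sub_cancel, pow_add]
    ring
  rw [hcomp]
  have hsum := (hasSum_A r a (n - 1) (by omega) ⟨hθ0, hθ1⟩).mul_left (c * (1 - θ) ^ x)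
  rw [← hSgdef] at hsum
  have hval : (c * (1 - θ) ^ x) * Sg ^ (n - 1) = h r a θ * p r a x * (1 - θ) ^ x := by
    have hpow : h r a θ ^ n = h r a θ ^ (n - 1) * h r a θ := by
      rw [← pow_succ]
      congr 1
      omega
    have hone : h r a θ ^ (n - 1) * Sg ^ (n - 1) = 1 := by
      rw [← mul_pow, hhSg, one_pow]
    calc (c * (1 - θ) ^ x) * Sg ^ (n - 1)
        = (h r a θ ^ (n - 1) * Sg ^ (n - 1)) * (h r a θ * p r a x * (1 - θ) ^ x) := by
          rw [hc, hpow]; ring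
      _ = h r a θ * p r a x * (1 - θ) ^ x := by rw [hone, one_mul]
  rw [← hval]
  exact hsum
end

section
/- For every θ ∈ (0,1), the mean of the NDOPPE distribution satisfies ∑_{x=0}^∞ x·f(x) = (1−θ)·h(θ)·∑_{k=1}^r a_{k−1}·k!/θ^{k+1}. -/
open scoped BigOperators

lemma ndoppe_aux (k : ℕ) {q : ℝ} (hq : ‖q‖ < 1) :
    HasSum (fun x : ℕ => (x : ℝ) * (Nat.choose (x + k) x : ℝ) * q ^ x)
      ((k + 1 : ℝ) * q * (1 / (1 - q) ^ (k + 2))) := by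
  have key : ∀ x : ℕ, x * Nat.choose (x + k) x = (k + 1) * Nat.choose (x + k) (k + 1) := by
    intro x
    have h2 : Nat.choose (x + k) x = Nat.choose (x + k) k := Nat.choose_symm_add
    rw [h2, mul_comm (k + 1), Nat.choose_succ_right_eq, Nat.add_sub_cancel, mul_comm]
  have h1 := (hasSum_choose_mul_geometric_of_norm_lt_one (𝕜 := ℝ) (k + 1) hq).mul_left
    ((k + 1 : ℝ) * q)
  have e2 : (fun m : ℕ => ((m + 1 : ℕ) : ℝ) * (Nat.choose (m + 1 + k) (m + 1) : ℝ) * q ^ (m + 1))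
      = fun m : ℕ => ((k : ℝ) + 1) * q * ((Nat.choose (m + (k + 1)) (k + 1) : ℝ) * q ^ m) := by
    funext m
    have e : m + 1 + k = m + (k + 1) := by omega
    have hk := key (m + 1)
    rw [e] at hk ⊢
    have hk' : ((m : ℝ) + 1) * (Nat.choose (m + (k + 1)) (m + 1) : ℝ)
        = ((k : ℝ) + 1) * (Nat.choose (m + (k + 1)) (k + 1) : ℝ) := by exact_mod_cast hk
    rw [pow_succ]
    push_cast
    linear_combination (q ^ m * q) * hk'
  have h2 : HasSum (fun m : ℕ => (fun x : ℕ => (x : ℝ) * (Nat.choose (x + k) x : ℝ) * q ^ x) (m + 1))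
      ((k + 1 : ℝ) * q * (1 / (1 - q) ^ (k + 2))) := by
    simp only []
    rw [e2]
    exact h1
  have h3 := (hasSum_nat_add_iff
    (f := fun x : ℕ => (x : ℝ) * (Nat.choose (x + k) x : ℝ) * q ^ x) 1).mp h2
  simpa using h3


/-- For every `θ ∈ (0,1)`, the mean of the NDOPPE distribution satisfies
`∑_{x=0}^∞ x f(x) = (1−θ) h(θ) ∑_{k=1}^r a_{k−1} k!/θ^{k+1}`
(index shifted: `k ∈ range r` stands for `k−1`). -/
theorem ndoppe_mean (r : ℕ) (hr : 1 ≤ r) (a : ℕ → ℝ) (ha : ∀ k, 0 ≤ a k)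
    (hne : ∃ k, k < r ∧ a k ≠ 0) (θ : ℝ) (hθ : θ ∈ Set.Ioo (0 : ℝ) 1) :
    HasSum (fun x : ℕ => (x : ℝ) * (h r a θ * p r a x * (1 - θ) ^ x))
      ((1 - θ) * h r a θ *
        ∑ k ∈ Finset.range r, a k * (Nat.factorial (k + 1) : ℝ) / θ ^ (k + 2)) := by
  obtain ⟨hθ0, hθ1⟩ := hθ
  have hq : ‖1 - θ‖ < 1 := by
    rw [Real.norm_eq_abs, abs_lt]; constructor <;> linarith
  have hterm : ∀ k ∈ Finset.range r,
      HasSum (fun x : ℕ => h r a θ * (a k * (Nat.factorial k : ℝ)) *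
          ((x : ℝ) * (Nat.choose (x + k) x : ℝ) * (1 - θ) ^ x))
        (h r a θ * (a k * (Nat.factorial k : ℝ)) *
          (((k : ℝ) + 1) * (1 - θ) * (1 / (1 - (1 - θ)) ^ (k + 2)))) :=
    fun k _ => (ndoppe_aux k hq).mul_left _
  have H := hasSum_sum hterm
  have efun : (fun x : ℕ => (x : ℝ) * (h r a θ * p r a x * (1 - θ) ^ x))
      = fun x : ℕ => ∑ k ∈ Finset.range r, h r a θ * (a k * (Nat.factorial k : ℝ)) *
          ((x : ℝ) * (Nat.choose (x + k) x : ℝ) * (1 - θ) ^ x) := by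
    funext x
    simp only [p, Finset.mul_sum, Finset.sum_mul]
    exact Finset.sum_congr rfl fun k _ => by ring
  have eval : (1 - θ) * h r a θ *
        ∑ k ∈ Finset.range r, a k * (Nat.factorial (k + 1) : ℝ) / θ ^ (k + 2)
      = ∑ k ∈ Finset.range r, h r a θ * (a k * (Nat.factorial k : ℝ)) *
          (((k : ℝ) + 1) * (1 - θ) * (1 / (1 - (1 - θ)) ^ (k + 2))) := by
    rw [Finset.mul_sum]
    refine Finset.sum_congr rfl fun k _ => ?_
    rw [Nat.factorial_succ]
    push_cast
    ring
  rw [efun, eval]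
  exact H
end

section
/- (NDL UMVUE remark, unbiasedness) For every integer n ≥ 2, every x ∈ ℕ and every θ ∈ (0,1), ∑_{t=x}^∞ [(2+x)·(∑_{k=0}^{n−1} C(n−1,k)·C(2(n−1)−k+t−x−1, t−x)) / (∑_{k=0}^n C(n,k)·C(2n−k+t−1, t))] · (θ²/(1+θ))^n·(∑_{k=0}^n C(n,k)·C(2n−k+t−1, t))·(1−θ)^t = (θ²/(1+θ))·(2+x)·(1−θ)^x; that is, the NDL PMF estimator f̂(x) given in the paper's Remark is unbiased for the NDL PMF when T has the PMF of the sum of n i.i.d. NDL variables. -/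
/-!
Write `c_m(t)` for the coefficient of `(1-θ)^t` in the PMF of a sum of `m` NDL variables.
The estimator's denominator cancels `c_n(t)`, so after the shift `t = s + x` the series is
`(2+x) (θ²/(1+θ))^n (1-θ)^x ∑_s c_{n-1}(s) (1-θ)^s`. Expanding `c_m` in `k` and summing each
negative binomial series gives `∑_s c_m(s) q^s = ∑_k C(m,k) (1-q)^k / (1-q)^{2m}
= (2-q)^m / (1-q)^{2m}`, which at `q = 1-θ` is `((1+θ)/θ²)^m`, the reciprocal of the
normalising constant; one factor `θ²/(1+θ)` survives.
-/

open Finset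

-- For `N = 0` the truncated subtraction makes the coefficients `C(s - 1, s) = [s = 0]`.
theorem hasSum_choose_add_sub_one_mul_geometric {𝕜 : Type*} [NormedDivisionRing 𝕜]
    (N : ℕ) {q : 𝕜} (hq : ‖q‖ < 1) :
    HasSum (fun s : ℕ => ((N + s - 1).choose s : 𝕜) * q ^ s) (1 / (1 - q) ^ N) := by
  cases N with
  | zero =>
    convert hasSum_single (f := fun s : ℕ => ((s - 1).choose s : 𝕜) * q ^ s) 0
      (fun s hs => by
        simp [Nat.choose_eq_zero_of_lt (Nat.sub_lt (Nat.pos_of_ne_zero hs) one_pos)])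
      using 1 <;> simp
  | succ k =>
    convert hasSum_choose_mul_geometric_of_norm_lt_one k hq using 3 with s
    rw [show k + 1 + s - 1 = s + k by omega, Nat.choose_symm_add]

/-- The PMF of a sum of `n` i.i.d. NDL(θ) variables is
`(θ²/(1+θ))^n · ndlSumCoeff n t · (1-θ)^t`. -/
noncomputable def ndlSumCoeff (n t : ℕ) : ℝ :=
  ∑ k ∈ range (n + 1), (n.choose k : ℝ) * ((2 * n - k + t - 1).choose t : ℝ)

theorem ndlSumCoeff_pos {n : ℕ} (hn : n ≠ 0) (t : ℕ) : 0 < ndlSumCoeff n t := by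
  refine sum_pos' (fun k _ => by positivity) ⟨0, by simp, ?_⟩
  have hchoose : 0 < (2 * n + t - 1).choose t := Nat.choose_pos (by omega)
  simpa using hchoose

theorem hasSum_ndlSumCoeff_mul_pow (n : ℕ) {θ : ℝ} (hθ : |1 - θ| < 1) :
    HasSum (fun t => ndlSumCoeff n t * (1 - θ) ^ t) ((1 + θ) ^ n / θ ^ (2 * n)) := by
  have hθ0 : θ ≠ 0 := by rintro rfl; simp at hθ
  have hterm : ∀ k ∈ range (n + 1), HasSum
      (fun t => (n.choose k : ℝ) * ((2 * n - k + t - 1).choose t : ℝ) * (1 - θ) ^ t)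
      ((n.choose k : ℝ) * θ ^ k / θ ^ (2 * n)) := by
    intro k hk
    have hk : k ≤ 2 * n := by have := mem_range.mp hk; omega
    have h := (hasSum_choose_add_sub_one_mul_geometric (2 * n - k)
      (by rwa [Real.norm_eq_abs])).mul_left (n.choose k : ℝ)
    have hval : (n.choose k : ℝ) * θ ^ k / θ ^ (2 * n)
        = n.choose k * (1 / (1 - (1 - θ)) ^ (2 * n - k)) := by
      rw [sub_sub_cancel, pow_sub₀ _ hθ0 hk]; field_simp
    rw [hval]
    exact h.congr_fun fun t => mul_assoc _ _ _
  convert hasSum_sum hterm using 1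
  · simp only [ndlSumCoeff, sum_mul]
  · rw [← sum_div, add_comm, add_pow]
    simp only [one_pow, mul_one, mul_comm]

/-- NDL UMVUE remark, unbiasedness: For every integer `n ≥ 2`, every
`x ∈ ℕ` and every `θ ∈ (0,1)`,
`∑_{t=x}^∞ [(2+x)(∑_{k=0}^{n−1} C(n−1,k) C(2(n−1)−k+t−x−1, t−x)) /
            (∑_{k=0}^n C(n,k) C(2n−k+t−1, t))]
   · (θ²/(1+θ))^n (∑_{k=0}^n C(n,k) C(2n−k+t−1, t)) (1−θ)^t
 = (θ²/(1+θ)) (2+x) (1−θ)^x`;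
i.e. the NDL PMF estimator `f̂(x)` of the paper's Remark is unbiased for the NDL PMF when
`T` has the PMF of the sum of `n` i.i.d. NDL variables. -/
theorem ndl_pmf_estimator_unbiased (n : ℕ) (hn : 2 ≤ n) (x : ℕ)
    (θ : ℝ) (hθ : θ ∈ Set.Ioo (0 : ℝ) 1) :
    HasSum
      (fun t : ℕ =>
        (if x ≤ t then
            (2 + (x : ℝ)) *
              (∑ k ∈ Finset.range n,
                (Nat.choose (n - 1) k : ℝ) *
                  (Nat.choose (2 * (n - 1) - k + (t - x) - 1) (t - x) : ℝ)) /
              (∑ k ∈ Finset.range (n + 1),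
                (Nat.choose n k : ℝ) * (Nat.choose (2 * n - k + t - 1) t : ℝ))
          else 0) *
          ((θ ^ 2 / (1 + θ)) ^ n *
            (∑ k ∈ Finset.range (n + 1),
              (Nat.choose n k : ℝ) * (Nat.choose (2 * n - k + t - 1) t : ℝ)) *
            (1 - θ) ^ t))
      (θ ^ 2 / (1 + θ) * (2 + (x : ℝ)) * (1 - θ) ^ x) := by
  obtain ⟨m, rfl⟩ : ∃ m, n = m + 1 := ⟨n - 1, by omega⟩
  obtain ⟨hθ0, hθ1⟩ := hθ
  simp only [Nat.add_sub_cancel]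
  change HasSum (fun t => (if x ≤ t then (2 + (x : ℝ)) * ndlSumCoeff m (t - x) /
      ndlSumCoeff (m + 1) t else 0) * ((θ ^ 2 / (1 + θ)) ^ (m + 1) * ndlSumCoeff (m + 1) t *
      (1 - θ) ^ t)) _
  rw [← (add_left_injective x).hasSum_iff fun t ht => by
    rw [if_neg fun h => ht ⟨t - x, Nat.sub_add_cancel h⟩, zero_mul]]
  have hq : |1 - θ| < 1 := by rw [abs_lt]; constructor <;> linarith
  have hsum := (hasSum_ndlSumCoeff_mul_pow m hq).mul_left
    ((2 + (x : ℝ)) * (θ ^ 2 / (1 + θ)) ^ (m + 1) * (1 - θ) ^ x)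
  have hval : θ ^ 2 / (1 + θ) * (2 + (x : ℝ)) * (1 - θ) ^ x
      = (2 + (x : ℝ)) * (θ ^ 2 / (1 + θ)) ^ (m + 1) * (1 - θ) ^ x *
          ((1 + θ) ^ m / θ ^ (2 * m)) := by
    have h1θ : 1 + θ ≠ 0 := by linarith
    rw [div_pow, ← pow_mul]
    field_simp
    ring
  rw [hval]
  refine hsum.congr_fun fun s => ?_
  have hden := (ndlSumCoeff_pos (Nat.succ_ne_zero m) (s + x)).ne'
  simp only [Function.comp_apply, le_add_self, if_true, Nat.add_sub_cancel]
  field_simp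
  ring
end
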